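/- arXiv:1901.08495 — 3 statements merged into one kernel-verified Lean document; each statement's English description precedes it below -/
import Mathlib

section
/- For every even natural number N ≥ 2 there exists a natural number λ such that the number of ordered pairs (l, m) of nonnegative integers satisfying l² + m² = λ is exactly N. (In the paper this is the key step showing that the Neumann Laplacian on the unit square has eigenvalues −π²λ of any prescribed even multiplicity N, using λ = 5^{N−1}.) -/
open Zsqrtd GaussianInt

lemma gi_unit_eq {z : GaussianInt} (h : IsUnit z) :
    z = 1 ∨ z = -1 ∨ z = ⟨0,1⟩ ∨ z = ⟨0,-1⟩ := by
  have h1 : z.norm = 1 := (Zsqrtd.norm_eq_one_iff' (by norm_num) z).mpr h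
  rw [Zsqrtd.norm_def] at h1
  have h2 : z.re * z.re + z.im * z.im = 1 := by linear_combination h1
  have hre : -1 ≤ z.re ∧ z.re ≤ 1 ∧ -1 ≤ z.im ∧ z.im ≤ 1 := by
    refine ⟨by nlinarith [mul_self_nonneg z.im], by nlinarith [mul_self_nonneg z.im],
      by nlinarith [mul_self_nonneg z.re], by nlinarith [mul_self_nonneg z.re]⟩
  obtain ⟨a1, a2, b1, b2⟩ := hre
  simp only [Zsqrtd.ext_iff]
  interval_cases h : z.re <;> interval_cases h' : z.im <;> simp_all <;> omega

lemma gi_irreducible_of_norm_five {z : GaussianInt} (h : z.norm = 5) : Prime z := by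
  rw [← UniqueFactorizationMonoid.irreducible_iff_prime]
  constructor
  · intro hu
    rw [← Zsqrtd.norm_eq_one_iff' (by norm_num) z] at hu
    omega
  · intro a b hab
    have hn : a.norm * b.norm = 5 := by rw [← Zsqrtd.norm_mul, ← hab, h]
    have ha0 : 0 ≤ a.norm := Zsqrtd.norm_nonneg (by norm_num) a
    have hb0 : 0 ≤ b.norm := Zsqrtd.norm_nonneg (by norm_num) b
    have hmn : a.norm.natAbs * b.norm.natAbs = 5 := by
      rw [← Int.natAbs_mul, hn]; rfl
    have hp5 : Nat.Prime (a.norm.natAbs * b.norm.natAbs) := by rw [hmn]; norm_num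
    have : a.norm = 1 ∨ b.norm = 1 := by
      rcases (Nat.prime_mul_iff.mp hp5) with ⟨_, h'⟩ | ⟨_, h'⟩ <;> omega
    rcases this with h' | h'
    · exact Or.inl ((Zsqrtd.norm_eq_one_iff' (by norm_num) a).mp h')
    · exact Or.inr ((Zsqrtd.norm_eq_one_iff' (by norm_num) b).mp h')

private def gα : GaussianInt := ⟨2,1⟩
private def gβ : GaussianInt := ⟨2,-1⟩

lemma gα_norm : gα.norm = 5 := by simp [gα, Zsqrtd.norm_def]
lemma gβ_norm : gβ.norm = 5 := by simp [gβ, Zsqrtd.norm_def]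
lemma gα_prime : Prime gα := gi_irreducible_of_norm_five gα_norm
lemma gβ_prime : Prime gβ := gi_irreducible_of_norm_five gβ_norm
lemma gαβ : gα * gβ = 5 := by
  simp only [Zsqrtd.ext_iff, gα, gβ, Zsqrtd.re_mul, Zsqrtd.im_mul]
  constructor <;> rfl
lemma gα_not_dvd_gβ : ¬ gα ∣ gβ := by
  intro h
  have h2 : gα ∣ ⟨0,2⟩ := by
    have : (⟨0,2⟩ : GaussianInt) = gα - gβ := by
      simp [Zsqrtd.ext_iff, gα, gβ, Zsqrtd.re_sub, Zsqrtd.im_sub]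
    rw [this]
    exact dvd_sub dvd_rfl h
  obtain ⟨c, hc⟩ := h2
  have h3 : Zsqrtd.norm (⟨0,2⟩ : GaussianInt) = 5 * c.norm := by
    rw [hc, Zsqrtd.norm_mul, gα_norm]
  have h4 : Zsqrtd.norm (⟨0,2⟩ : GaussianInt) = 4 := by simp [Zsqrtd.norm_def]
  have h5 : 0 ≤ c.norm := Zsqrtd.norm_nonneg (by norm_num) c
  omega
lemma gβ_star : star gα = gβ := by simp [Zsqrtd.ext_iff, gα, gβ, Zsqrtd.re_star, Zsqrtd.im_star]

lemma gi_classify (j : ℕ) (z : GaussianInt) (h : z.norm = 5 ^ j) :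
    ∃ u s, IsUnit u ∧ s ≤ j ∧ z = u * gα ^ s * gβ ^ (j - s) := by
  induction j generalizing z with
  | zero =>
    exact ⟨z, 0, (Zsqrtd.norm_eq_one_iff' (by norm_num) z).mp (by simpa using h), le_refl _, by simp⟩
  | succ j ih =>
    have h5 : gα ∣ z * star z := by
      have heq : z * star z = (((5:ℤ)^(j+1) : ℤ) : GaussianInt) := by
        rw [← h, ← Zsqrtd.norm_eq_mul_conj]
      rw [heq]
      have : (((5:ℤ)^(j+1) : ℤ) : GaussianInt) = (gα * gβ) ^ (j+1) := by
        rw [gαβ]; push_cast; ring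
      rw [this, mul_pow]
      exact Dvd.dvd.mul_right (dvd_pow_self gα (Nat.succ_ne_zero j)) _
    rcases gα_prime.2.2 z (star z) h5 with hz | hz
    · obtain ⟨w, hw⟩ := hz
      have hnw : w.norm = 5 ^ j := by
        have := Zsqrtd.norm_mul gα w
        rw [← hw, h, gα_norm] at this
        have h5 : (5:ℤ) ^ (j+1) = 5 * 5 ^ j := by ring
        rw [h5] at this
        exact (mul_left_cancel₀ (by norm_num) this).symm
      obtain ⟨u, s, hu, hs, he⟩ := ih w hnw
      exact ⟨u, s + 1, hu, by omega, by rw [show j + 1 - (s+1) = j - s from by omega, hw, he]; ring⟩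
    · obtain ⟨w, hw⟩ := hz
      have hzz : z = gβ * star w := by
        have := congrArg star hw
        rwa [star_star, star_mul', gβ_star] at this
      have hnw : (star w).norm = 5 ^ j := by
        have := Zsqrtd.norm_mul gβ (star w)
        rw [← hzz, h, gβ_norm] at this
        have h5 : (5:ℤ) ^ (j+1) = 5 * 5 ^ j := by ring
        rw [h5] at this
        exact (mul_left_cancel₀ (by norm_num) this).symm
      obtain ⟨u, s, hu, hs, he⟩ := ih (star w) hnw
      refine ⟨u, s, hu, by omega, ?_⟩
      rw [hzz, he, show j + 1 - s = (j - s) + 1 by omega]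
      ring

lemma gi_aux {j s t : ℕ} {u v : GaussianInt} (hst : s < t) (hu : IsUnit u)
    (h : u * gα ^ s * gβ ^ (j - s) = v * gα ^ t * gβ ^ (j - t)) : False := by
  rw [show t = s + (t - s) from by omega, pow_add] at h
  rw [show j - (s + (t - s)) = j - t from by omega] at h
  have h2 : gα ^ s * (u * gβ ^ (j - s)) = gα ^ s * (gα ^ (t - s) * (v * gβ ^ (j - t))) :=
    by linear_combination h
  have h3 : u * gβ ^ (j - s) = gα ^ (t - s) * (v * gβ ^ (j - t)) :=
    mul_left_cancel₀ (pow_ne_zero s gα_prime.ne_zero) h2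
  have hd : gα ∣ u * gβ ^ (j - s) := h3 ▸ Dvd.dvd.mul_right (dvd_pow_self gα (by omega)) _
  rcases gα_prime.2.2 u _ hd with hdu | hdb
  · exact gα_prime.2.1 (isUnit_of_dvd_unit hdu hu)
  · exact gα_not_dvd_gβ (gα_prime.dvd_of_dvd_pow hdb)

lemma gi_inj {j s t : ℕ} {u v : GaussianInt} (hu : IsUnit u) (hv : IsUnit v)
    (h : u * gα ^ s * gβ ^ (j - s) = v * gα ^ t * gβ ^ (j - t)) : s = t ∧ u = v := by
  rcases lt_trichotomy s t with hlt | heq | hgt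
  · exact absurd (gi_aux hlt hu h) (by simp)
  · subst heq
    refine ⟨rfl, ?_⟩
    have := mul_right_cancel₀ (pow_ne_zero (j - s) gβ_prime.ne_zero) h
    exact mul_right_cancel₀ (pow_ne_zero s gα_prime.ne_zero) this
  · exact absurd (gi_aux hgt hv h.symm) (by simp)

lemma gnorm_pow (z : GaussianInt) (n : ℕ) : (z ^ n).norm = z.norm ^ n := by
  induction n with
  | zero => simp
  | succ n ih => rw [pow_succ, pow_succ, Zsqrtd.norm_mul, ih]

def gU : Finset GaussianInt := {1, -1, ⟨0,1⟩, ⟨0,-1⟩}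

lemma gU_card : gU.card = 4 := by decide

lemma gU_unit {u : GaussianInt} (hu : u ∈ gU) : IsUnit u := by
  fin_cases hu
  · exact isUnit_one
  · exact isUnit_one.neg
  · exact IsUnit.of_mul_eq_one (⟨0,-1⟩ : GaussianInt) (by
      simp [Zsqrtd.ext_iff, Zsqrtd.re_mul, Zsqrtd.im_mul])
  · exact IsUnit.of_mul_eq_one (⟨0,1⟩ : GaussianInt) (by
      simp [Zsqrtd.ext_iff, Zsqrtd.re_mul, Zsqrtd.im_mul])

lemma gZ_card (j : ℕ) : Set.ncard {z : GaussianInt | z.norm = 5 ^ j} = 4 * (j + 1) := by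
  classical
  have hset : {z : GaussianInt | z.norm = 5 ^ j} =
      ↑((Finset.range (j+1) ×ˢ gU).image (fun p => p.2 * gα ^ p.1 * gβ ^ (j - p.1))) := by
    ext z
    simp only [Set.mem_setOf_eq, Finset.coe_image, Set.mem_image, Finset.mem_coe,
      Finset.mem_product, Finset.mem_range]
    constructor
    · intro hz
      obtain ⟨u, s, hu, hs, he⟩ := gi_classify j z hz
      rcases gi_unit_eq hu with h | h | h | h <;>
        exact ⟨(s, u), ⟨by omega, by simp [gU, h]⟩, he.symm⟩
    · rintro ⟨⟨s, u⟩, ⟨hs, hu⟩, rfl⟩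
      have hnu : u.norm = 1 := (Zsqrtd.norm_eq_one_iff' (by norm_num) u).mpr (gU_unit hu)
      simp only [Zsqrtd.norm_mul, gnorm_pow, hnu, gα_norm, gβ_norm, one_mul]
      rw [← pow_add]
      congr 1
      omega
  rw [hset, Set.ncard_coe_finset]
  rw [Finset.card_image_of_injOn]
  · rw [Finset.card_product, Finset.card_range, gU_card]; ring
  · rintro ⟨s, u⟩ hsu ⟨t, v⟩ htv he
    simp only [Finset.mem_coe, Finset.mem_product, Finset.mem_range] at hsu htv
    obtain ⟨h1, h2⟩ := gi_inj (gU_unit hsu.2) (gU_unit htv.2) he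
    simp only [Prod.mk.injEq]
    exact ⟨h1, h2⟩

lemma nat_sq_ne_pow {j : ℕ} (hj : Odd j) (n : ℕ) : n ^ 2 ≠ 5 ^ j := by
  intro h
  have hd : n ∣ 5 ^ j := by rw [← h]; exact dvd_pow_self n (by norm_num)
  obtain ⟨k, hk, rfl⟩ := (Nat.dvd_prime_pow (by norm_num)).mp hd
  rw [← pow_mul] at h
  have := Nat.pow_right_injective (by norm_num : 2 ≤ 5) h
  obtain ⟨m, hm⟩ := hj
  omega

lemma gi_ne_axis {j : ℕ} (hj : Odd j) {z : GaussianInt} (h : z.norm = 5 ^ j) :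
    z.re ≠ 0 ∧ z.im ≠ 0 := by
  rw [Zsqrtd.norm_def] at h
  constructor
  · intro h0
    rw [h0] at h
    have him : z.im.natAbs ^ 2 = 5 ^ j := by
      have : (z.im.natAbs : ℤ) ^ 2 = (5:ℤ) ^ j := by
        linear_combination Int.natAbs_mul_self' z.im + h
      exact_mod_cast this
    exact nat_sq_ne_pow hj _ him
  · intro h0
    rw [h0] at h
    have hre : z.re.natAbs ^ 2 = 5 ^ j := by
      have : (z.re.natAbs : ℤ) ^ 2 = (5:ℤ) ^ j := by
        linear_combination Int.natAbs_mul_self' z.re + h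
      exact_mod_cast this
    exact nat_sq_ne_pow hj _ hre

lemma gI2 : (⟨0,1⟩:GaussianInt)^(2:ℕ) = ⟨-1,0⟩ := by
  simp [pow_succ, Zsqrtd.ext_iff, Zsqrtd.re_mul, Zsqrtd.im_mul]

lemma gI3 : (⟨0,1⟩:GaussianInt)^(3:ℕ) = ⟨0,-1⟩ := by
  simp [pow_succ, Zsqrtd.ext_iff, Zsqrtd.re_mul, Zsqrtd.im_mul]

lemma gZ_four (j : ℕ) (hj : Odd j) :
    Set.ncard {z : GaussianInt | z.norm = 5 ^ j} =
      4 * Set.ncard {p : ℕ × ℕ | p.1 ^ 2 + p.2 ^ 2 = 5 ^ j} := by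
  classical
  set S : Set (ℕ × ℕ) := {p : ℕ × ℕ | p.1 ^ 2 + p.2 ^ 2 = 5 ^ j} with hS
  set H : (ℕ × ℕ) × Fin 4 → GaussianInt :=
    fun q => (⟨0,1⟩ : GaussianInt) ^ (q.2 : ℕ) * ⟨(q.1.1 : ℤ), (q.1.2 : ℤ)⟩ with hH
  have hbij : Set.BijOn H (S ×ˢ (Set.univ : Set (Fin 4))) {z : GaussianInt | z.norm = 5 ^ j} := by
    refine ⟨?_, ?_, ?_⟩
    · rintro ⟨⟨a, b⟩, k⟩ ⟨hp, -⟩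
      simp only [Set.mem_setOf_eq, hS] at hp
      simp only [Set.mem_setOf_eq, hH]
      rw [Zsqrtd.norm_mul, gnorm_pow,
        show Zsqrtd.norm (⟨0,1⟩ : GaussianInt) = 1 from by simp [Zsqrtd.norm_def],
        one_pow, one_mul, Zsqrtd.norm_def]
      have hc : ((a:ℤ))^2 + ((b:ℤ))^2 = (5:ℤ)^j := by exact_mod_cast hp
      linear_combination hc
    · rintro ⟨⟨a, b⟩, k⟩ ⟨hp, -⟩ ⟨⟨c, d⟩, k'⟩ ⟨hq, -⟩ he
      simp only [Set.mem_setOf_eq, hS] at hp hq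
      have ha : a ≠ 0 := by rintro rfl; exact nat_sq_ne_pow hj b (by simpa using hp)
      have hb : b ≠ 0 := by rintro rfl; exact nat_sq_ne_pow hj a (by simpa using hp)
      have hc : c ≠ 0 := by rintro rfl; exact nat_sq_ne_pow hj d (by simpa using hq)
      have hd : d ≠ 0 := by rintro rfl; exact nat_sq_ne_pow hj c (by simpa using hq)
      have h1 := congrArg Zsqrtd.re he
      have h2 := congrArg Zsqrtd.im he
      simp only [hH] at h1 h2
      simp only [Prod.mk.injEq]
      fin_cases k <;> fin_cases k' <;>
        simp only [Fin.val_zero, Fin.val_one, Fin.isValue, pow_zero, pow_one, pow_succ,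
          one_mul, mul_one, Zsqrtd.re_mul, Zsqrtd.im_mul] at h1 h2 <;>
        norm_num at h1 h2 ⊢ <;> omega
    · intro z hz
      simp only [Set.mem_setOf_eq] at hz
      obtain ⟨hre, him⟩ := gi_ne_axis hj hz
      have hn : z.re * z.re + z.im * z.im = 5 ^ j := by
        have := hz; rw [Zsqrtd.norm_def] at this; linear_combination this
      rcases hre.lt_or_gt with hre' | hre' <;> rcases him.lt_or_gt with him' | him'
      · -- re < 0, im < 0 : k = 2, p = (-re, -im)
        refine ⟨(((-z.re).toNat, (-z.im).toNat), (2 : Fin 4)), ⟨?_, Set.mem_univ _⟩, ?_⟩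
        · simp only [Set.mem_setOf_eq, hS]
          have : (((-z.re).toNat : ℤ))^2 + (((-z.im).toNat : ℤ))^2 = (5:ℤ)^j := by
            rw [Int.toNat_of_nonneg (by omega), Int.toNat_of_nonneg (by omega)]
            linear_combination hn
          exact_mod_cast this
        · simp only [hH, show (((2:Fin 4)):ℕ) = 2 from rfl, gI2, Zsqrtd.ext_iff,
            Zsqrtd.re_mul, Zsqrtd.im_mul]
          norm_num
          constructor <;> omega
      · -- re < 0, im > 0 : k = 1, p = (im, -re)
        refine ⟨((z.im.toNat, (-z.re).toNat), (1 : Fin 4)), ⟨?_, Set.mem_univ _⟩, ?_⟩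
        · simp only [Set.mem_setOf_eq, hS]
          have : ((z.im.toNat : ℤ))^2 + (((-z.re).toNat : ℤ))^2 = (5:ℤ)^j := by
            rw [Int.toNat_of_nonneg (by omega), Int.toNat_of_nonneg (by omega)]
            linear_combination hn
          exact_mod_cast this
        · simp only [hH, Zsqrtd.ext_iff, Zsqrtd.re_mul, Zsqrtd.im_mul, pow_one]
          norm_num
          constructor <;> omega
      · -- re > 0, im < 0 : k = 3, p = (-im, re)
        refine ⟨(((-z.im).toNat, z.re.toNat), (3 : Fin 4)), ⟨?_, Set.mem_univ _⟩, ?_⟩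
        · simp only [Set.mem_setOf_eq, hS]
          have : (((-z.im).toNat : ℤ))^2 + ((z.re.toNat : ℤ))^2 = (5:ℤ)^j := by
            rw [Int.toNat_of_nonneg (by omega), Int.toNat_of_nonneg (by omega)]
            linear_combination hn
          exact_mod_cast this
        · simp only [hH, show (((3:Fin 4)):ℕ) = 3 from rfl, gI3, Zsqrtd.ext_iff,
            Zsqrtd.re_mul, Zsqrtd.im_mul]
          norm_num
          constructor <;> omega
      · -- re > 0, im > 0 : k = 0, p = (re, im)
        refine ⟨((z.re.toNat, z.im.toNat), (0 : Fin 4)), ⟨?_, Set.mem_univ _⟩, ?_⟩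
        · simp only [Set.mem_setOf_eq, hS]
          have : ((z.re.toNat : ℤ))^2 + ((z.im.toNat : ℤ))^2 = (5:ℤ)^j := by
            rw [Int.toNat_of_nonneg (by omega), Int.toNat_of_nonneg (by omega)]
            linear_combination hn
          exact_mod_cast this
        · simp only [hH, Zsqrtd.ext_iff, Zsqrtd.re_mul, Zsqrtd.im_mul, pow_zero]
          norm_num
          constructor <;> omega
  have h1 : {z : GaussianInt | z.norm = 5 ^ j} = H '' (S ×ˢ (Set.univ : Set (Fin 4))) :=
    hbij.image_eq.symm
  rw [h1, Set.ncard_image_of_injOn hbij.injOn]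
  rw [← Nat.card_coe_set_eq, Nat.card_congr (Equiv.Set.prod S (Set.univ : Set (Fin 4))),
    Nat.card_prod, Nat.card_coe_set_eq]
  have : Nat.card (Set.univ : Set (Fin 4)) = 4 := by
    rw [Nat.card_coe_set_eq, Set.ncard_univ]; simp
  rw [this]
  ring

/-- For every even natural number `N ≥ 2` there exists a natural number `lam` such that
the number of ordered pairs `(l, m)` of nonnegative integers with `l² + m² = lam`
is exactly `N`. -/
theorem square_sum_representation_count_even (N : ℕ) (hN : 2 ≤ N) (hEven : Even N) :
    ∃ lam : ℕ, {p : ℕ × ℕ | p.1 ^ 2 + p.2 ^ 2 = lam}.ncard = N := by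
  refine ⟨5 ^ (N - 1), ?_⟩
  have hj : Odd (N - 1) := Nat.Even.sub_odd (by omega) hEven odd_one
  have h1 := gZ_card (N - 1)
  have h2 := gZ_four (N - 1) hj
  rw [h1] at h2
  omega
end

section
/- In the abstract spectral setting, let k > 0 and let a < b be real numbers such that (1 + a k²)·λ_l ≠ 1 and (1 + b k²)·λ_l ≠ 1 for all l ∈ ℕ, and let S(a) and S(b) denote the bounded inverses of Id − (1 + a k²)K and Id − (1 + b k²)K respectively. Define c_l := 1/(1 − (1 + b k²)λ_l) − 1/(1 − (1 + a k²)λ_l). Then: (i) for every F ∈ H one has ⟨(S(b) − S(a))F, F⟩ = Σ_{l∈ℕ} c_l · ⟨F, e_l⟩², the series converging absolutely; (ii) c_l ≠ 0 for every l, and c_l < 0 if and only if (1 + a k²)λ_l < 1 < (1 + b k²)λ_l; (iii) the set {l : c_l < 0} is finite and its cardinality equals the (finite) cardinality of {l : (1 + b k²)λ_l > 1} minus the (finite) cardinality of {l : (1 + a k²)λ_l > 1}. -/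
open Filter

/-- Abstract spectral setting: `H` a real Hilbert space, `K` a bounded self-adjoint
operator with a Hilbert basis `(e_l)` of eigenvectors, `K e_l = λ_l e_l`, `λ_l > 0`,
`λ_l → 0`. Let `k > 0`, `a < b` be non-resonant, and `S(a)`, `S(b)` the bounded
inverses of `Id − (1+a k²)K`, `Id − (1+b k²)K`. With
`c_l = 1/(1−(1+b k²)λ_l) − 1/(1−(1+a k²)λ_l)`:
(i) `⟨(S(b)−S(a))F, F⟩ = Σ_l c_l ⟨F, e_l⟩²` (absolutely convergent);
(ii) `c_l ≠ 0`, and `c_l < 0` iff `(1+a k²)λ_l < 1 < (1+b k²)λ_l`;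
(iii) `{l : c_l < 0}` is finite of cardinality `d(b) − d(a)`, where
`d(c) = #{l : (1+c k²)λ_l > 1}` is finite. -/
theorem quadratic_form_difference_solution_operators
    {H : Type*} [NormedAddCommGroup H] [InnerProductSpace ℝ H] [CompleteSpace H]
    (K : H →L[ℝ] H) (hK : IsSelfAdjoint K)
    (e : ℕ → H) (lam : ℕ → ℝ)
    (he_on : Orthonormal ℝ e)
    (he_dense : (Submodule.span ℝ (Set.range e)).topologicalClosure = ⊤)
    (heig : ∀ l, K (e l) = lam l • e l)
    (hpos : ∀ l, 0 < lam l)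
    (hlim : Tendsto lam atTop (nhds 0))
    (k a b : ℝ) (hk : 0 < k) (hab : a < b)
    (ha : ∀ l, (1 + a * k ^ 2) * lam l ≠ 1)
    (hb : ∀ l, (1 + b * k ^ 2) * lam l ≠ 1)
    (Sa Sb : H →L[ℝ] H)
    (hSa : ∀ x : H, Sa (x - (1 + a * k ^ 2) • K x) = x)
    (hSa' : ∀ y : H, Sa y - (1 + a * k ^ 2) • K (Sa y) = y)
    (hSb : ∀ x : H, Sb (x - (1 + b * k ^ 2) • K x) = x)
    (hSb' : ∀ y : H, Sb y - (1 + b * k ^ 2) • K (Sb y) = y)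
    (c : ℕ → ℝ)
    (hc : ∀ l, c l = 1 / (1 - (1 + b * k ^ 2) * lam l)
        - 1 / (1 - (1 + a * k ^ 2) * lam l)) :
    (∀ F : H, HasSum (fun l => c l * (inner ℝ F (e l) : ℝ) ^ 2)
        ((inner ℝ ((Sb - Sa) F) F : ℝ))) ∧
    (∀ l, c l ≠ 0 ∧
      (c l < 0 ↔ (1 + a * k ^ 2) * lam l < 1 ∧ 1 < (1 + b * k ^ 2) * lam l)) ∧
    ({l : ℕ | c l < 0}.Finite ∧
      {l : ℕ | 1 < (1 + a * k ^ 2) * lam l}.Finite ∧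
      {l : ℕ | 1 < (1 + b * k ^ 2) * lam l}.Finite ∧
      {l : ℕ | c l < 0}.ncard
        = {l : ℕ | 1 < (1 + b * k ^ 2) * lam l}.ncard
          - {l : ℕ | 1 < (1 + a * k ^ 2) * lam l}.ncard) := by

  set A := 1 + a * k ^ 2 with hA
  set B := 1 + b * k ^ 2 with hB
  have hAB : A < B := by nlinarith [pow_pos hk 2]
  have hane : ∀ l, 1 - A * lam l ≠ 0 := fun l h => ha l (by linarith [sub_eq_zero.mp h])
  have hbne : ∀ l, 1 - B * lam l ≠ 0 := fun l h => hb l (by linarith [sub_eq_zero.mp h])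
  have hlt : ∀ l, A * lam l < B * lam l :=
    fun l => mul_lt_mul_of_pos_right hAB (hpos l)
  -- key product identity for c
  have hkey : ∀ l, c l * ((1 - B * lam l) * (1 - A * lam l)) = (B - A) * lam l := by
    intro l
    have h1 := hane l
    have h2 := hbne l
    rw [hc l]
    rw [div_sub_div _ _ h2 h1, div_mul_cancel₀ _ (mul_ne_zero h2 h1)]
    ring
  have hpos' : ∀ l, 0 < (B - A) * lam l :=
    fun l => mul_pos (by linarith) (hpos l)
  -- Part (ii)
  have part2 : ∀ l, c l ≠ 0 ∧ (c l < 0 ↔ A * lam l < 1 ∧ 1 < B * lam l) := by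
    intro l
    have h1 := hkey l
    have h2 := hpos' l
    constructor
    · intro h0
      rw [h0, zero_mul] at h1
      linarith
    · constructor
      · intro hneg
        have hprod : (1 - B * lam l) * (1 - A * lam l) < 0 := by
          rcases lt_trichotomy ((1 - B * lam l) * (1 - A * lam l)) 0 with h | h | h
          · exact h
          · rw [h, mul_zero] at h1; linarith
          · nlinarith
        have := hlt l
        constructor
        · by_contra hle
          push_neg at hle
          have h3 : 1 - A * lam l ≤ 0 := by linarith
          have h4 : 1 - B * lam l < 0 := by linarith
          nlinarith
        · by_contra hle
          push_neg at hle
          have h3 : 0 ≤ 1 - B * lam l := by linarith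
          have h4 : 0 < 1 - A * lam l := by linarith
          nlinarith
      · rintro ⟨h3, h4⟩
        have h5 : 0 < 1 - A * lam l := by linarith
        have h6 : 1 - B * lam l < 0 := by linarith
        by_contra hge
        push_neg at hge
        have hprod : (1 - B * lam l) * (1 - A * lam l) < 0 :=
          mul_neg_of_neg_of_pos h6 h5
        nlinarith [mul_nonneg hge (le_of_lt (neg_pos.mpr hprod))]
  -- eigenvalues of Sa and Sb
  have hSae : ∀ l, Sa (e l) = (1 - A * lam l)⁻¹ • e l := by
    intro l
    have h1 : e l - A • K (e l) = (1 - A * lam l) • e l := by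
      rw [heig l, smul_smul, sub_smul, one_smul]
    have h2 := hSa (e l)
    rw [h1, map_smul] at h2
    conv_rhs => rw [← h2]
    rw [smul_smul, inv_mul_cancel₀ (hane l), one_smul]
  have hSbe : ∀ l, Sb (e l) = (1 - B * lam l)⁻¹ • e l := by
    intro l
    have h1 : e l - B • K (e l) = (1 - B * lam l) • e l := by
      rw [heig l, smul_smul, sub_smul, one_smul]
    have h2 := hSb (e l)
    rw [h1, map_smul] at h2
    conv_rhs => rw [← h2]
    rw [smul_smul, inv_mul_cancel₀ (hbne l), one_smul]
  -- symmetry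
  have hKsym : ∀ x y : H, (inner ℝ (K x) y : ℝ) = inner ℝ x (K y) :=
    (ContinuousLinearMap.isSelfAdjoint_iff_isSymmetric.mp hK)
  have hsym : ∀ (S : H →L[ℝ] H) (t : ℝ), (∀ y : H, S y - t • K (S y) = y) →
      ∀ x y : H, (inner ℝ (S x) y : ℝ) = inner ℝ x (S y) := by
    intro S t hS' x y
    calc (inner ℝ (S x) y : ℝ) = inner ℝ (S x) (S y - t • K (S y)) := by rw [hS' y]
      _ = inner ℝ (S x) (S y) - t * inner ℝ (S x) (K (S y)) := by
          rw [inner_sub_right, real_inner_smul_right]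
      _ = inner ℝ (S x) (S y) - t * inner ℝ (K (S x)) (S y) := by rw [hKsym]
      _ = inner ℝ (S x - t • K (S x)) (S y) := by
          rw [inner_sub_left, real_inner_smul_left]
      _ = inner ℝ x (S y) := by rw [hS' x]
  have hSasym := hsym Sa A hSa'
  have hSbsym := hsym Sb B hSb'
  -- Hilbert basis
  let Bb : HilbertBasis ℕ ℝ H := HilbertBasis.mk he_on (by rw [he_dense])
  have hBb : ∀ l, Bb l = e l := fun l =>
    congrFun (HilbertBasis.coe_mk he_on _) l
  -- Part (i)
  have part1 : ∀ F : H, HasSum (fun l => c l * (inner ℝ F (e l) : ℝ) ^ 2)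
      ((inner ℝ ((Sb - Sa) F) F : ℝ)) := by
    intro F
    have h := Bb.hasSum_inner_mul_inner ((Sb - Sa) F) F
    convert h using 1
    · rfl
    funext l
    rw [hBb l]
    have h1 : (inner ℝ ((Sb - Sa) F) (e l) : ℝ) = c l * inner ℝ F (e l) := by
      have : (inner ℝ ((Sb - Sa) F) (e l) : ℝ)
          = inner ℝ (Sb F) (e l) - inner ℝ (Sa F) (e l) := by
        simp [inner_sub_left]
      rw [this, hSbsym F (e l), hSasym F (e l), hSbe l, hSae l,
        real_inner_smul_right, real_inner_smul_right, hc l]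
      ring
    rw [h1, real_inner_comm (e l) F]
    ring
  refine ⟨part1, part2, ?_⟩
  -- Part (iii)
  have hfin : ∀ t : ℝ, {l : ℕ | 1 < t * lam l}.Finite := by
    intro t
    have h : Tendsto (fun l => t * lam l) atTop (nhds 0) := by
      simpa using hlim.const_mul t
    have hev : ∀ᶠ l in atTop, t * lam l < 1 :=
      h.eventually (eventually_lt_nhds one_pos)
    rcases eventually_atTop.mp hev with ⟨N, hN⟩
    apply Set.Finite.subset (Set.finite_Iio N)
    intro l hl
    by_contra hge
    exact absurd (hN l (not_lt.mp hge)) (not_lt.mpr (le_of_lt hl))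
  have hfinA := hfin A
  have hfinB := hfin B
  have hsub : {l : ℕ | 1 < A * lam l} ⊆ {l : ℕ | 1 < B * lam l} :=
    fun l hl => lt_trans hl (hlt l)
  have hseteq : {l : ℕ | c l < 0}
      = {l : ℕ | 1 < B * lam l} \ {l : ℕ | 1 < A * lam l} := by
    ext l
    simp only [Set.mem_setOf_eq, Set.mem_diff, not_lt]
    rw [(part2 l).2]
    constructor
    · rintro ⟨h1, h2⟩; exact ⟨h2, le_of_lt h1⟩
    · rintro ⟨h1, h2⟩
      exact ⟨lt_of_le_of_ne h2 (ha l), h1⟩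
  refine ⟨hseteq ▸ (hfinB.subset Set.diff_subset), hfinA, hfinB, ?_⟩
  rw [hseteq, Set.ncard_diff hsub hfinA]
end

section
/- In the abstract spectral setting, let k > 0 and let a < b be real numbers such that (1 + a k²)·λ_l ≠ 1 and (1 + b k²)·λ_l ≠ 1 for all l ∈ ℕ, and let S(a) and S(b) denote the bounded inverses of Id − (1 + a k²)K and Id − (1 + b k²)K respectively. Let N be the (finite) cardinality of the set {l ∈ ℕ : (1 + a k²)λ_l < 1 < (1 + b k²)λ_l} (equivalently, N = d(b) − d(a) where d(c) is the finite cardinality of {l : (1 + c k²)λ_l > 1}). Then there exists a subspace V of H of finite dimension exactly N such that ⟨(S(b) − S(a))x, x⟩ < 0 for every nonzero x ∈ V, and ⟨(S(b) − S(a))x, x⟩ ≥ 0 for every x in the orthogonal complement of V. (This expresses that S(b) − S(a) has exactly d(b) − d(a) negative eigenvalues, counted with multiplicity.) -/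
open Filter

/-- Abstract spectral setting: `H` a real Hilbert space, `K` a bounded self-adjoint
operator with a Hilbert basis `(e_l)` of eigenvectors, `K e_l = λ_l e_l`, `λ_l > 0`,
`λ_l → 0`. Let `k > 0`, `a < b` be non-resonant, `S(a)`, `S(b)` the bounded inverses
of `Id − (1+a k²)K`, `Id − (1+b k²)K`, and let
`N = #{l : (1+a k²)λ_l < 1 < (1+b k²)λ_l}`. Then there is a subspace `V ⊆ H` with
`dim V = N` on which the quadratic form of `S(b) − S(a)` is negative (away from `0`),
and which is nonnegative on `Vᗮ`; i.e. `S(b) − S(a)` has exactly `N = d(b) − d(a)`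
negative eigenvalues. -/
theorem solution_operator_difference_negative_eigenvalue_count
    {H : Type*} [NormedAddCommGroup H] [InnerProductSpace ℝ H] [CompleteSpace H]
    (K : H →L[ℝ] H) (hK : IsSelfAdjoint K)
    (e : ℕ → H) (lam : ℕ → ℝ)
    (he_on : Orthonormal ℝ e)
    (he_dense : (Submodule.span ℝ (Set.range e)).topologicalClosure = ⊤)
    (heig : ∀ l, K (e l) = lam l • e l)
    (hpos : ∀ l, 0 < lam l)
    (hlim : Tendsto lam atTop (nhds 0))
    (k a b : ℝ) (hk : 0 < k) (hab : a < b)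
    (ha : ∀ l, (1 + a * k ^ 2) * lam l ≠ 1)
    (hb : ∀ l, (1 + b * k ^ 2) * lam l ≠ 1)
    (Sa Sb : H →L[ℝ] H)
    (hSa : ∀ x : H, Sa (x - (1 + a * k ^ 2) • K x) = x)
    (hSa' : ∀ y : H, Sa y - (1 + a * k ^ 2) • K (Sa y) = y)
    (hSb : ∀ x : H, Sb (x - (1 + b * k ^ 2) • K x) = x)
    (hSb' : ∀ y : H, Sb y - (1 + b * k ^ 2) • K (Sb y) = y)
    (N : ℕ)
    (hN : {l : ℕ | (1 + a * k ^ 2) * lam l < 1 ∧ 1 < (1 + b * k ^ 2) * lam l}.ncard = N) :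
    ∃ V : Submodule ℝ H, FiniteDimensional ℝ V ∧ Module.finrank ℝ V = N ∧
      (∀ x ∈ V, x ≠ 0 → (inner ℝ ((Sb - Sa) x) x : ℝ) < 0) ∧
      (∀ x ∈ Vᗮ, (0:ℝ) ≤ (inner ℝ ((Sb - Sa) x) x : ℝ)) := by
  classical
  set α' : ℝ := 1 + a * k ^ 2 with hα'
  set β' : ℝ := 1 + b * k ^ 2 with hβ'
  have hαβ : α' < β' := by
    have : a * k ^ 2 < b * k ^ 2 :=
      mul_lt_mul_of_pos_right hab (by positivity)
    simp only [hα', hβ']; linarith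
  clear_value α' β'
  -- symmetry of K
  have hKsym : ∀ x y : H, (inner ℝ (K x) y : ℝ) = inner ℝ x (K y) :=
    fun x y => (ContinuousLinearMap.isSelfAdjoint_iff_isSymmetric.mp hK) x y
  -- symmetry of the solution operators
  have symS : ∀ (c : ℝ) (S : H →L[ℝ] H), (∀ y, S y - c • K (S y) = y) →
      ∀ x y : H, (inner ℝ (S x) y : ℝ) = inner ℝ x (S y) := by
    intro c S hS x y
    conv_lhs => rw [← hS y]
    conv_rhs => rw [← hS x]
    rw [inner_sub_right, inner_sub_left, real_inner_smul_right, real_inner_smul_left,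
      hKsym (S x) (S y)]
  -- eigenvectors of the solution operators
  have eigS : ∀ (c : ℝ) (S : H →L[ℝ] H), (∀ x, S (x - c • K x) = x) →
      ∀ l, (1 - c * lam l) ≠ 0 → S (e l) = (1 - c * lam l)⁻¹ • e l := by
    intro c S hS l hne
    have harg : (1 - c * lam l)⁻¹ • e l - c • K ((1 - c * lam l)⁻¹ • e l) = e l := by
      rw [map_smul, heig]
      match_scalars
      field_simp
    have h := hS ((1 - c * lam l)⁻¹ • e l)
    rw [harg] at h
    exact h
  have hden_a : ∀ l, 1 - α' * lam l ≠ 0 := fun l => sub_ne_zero.mpr (Ne.symm (ha l))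
  have hden_b : ∀ l, 1 - β' * lam l ≠ 0 := fun l => sub_ne_zero.mpr (Ne.symm (hb l))
  set μ : ℕ → ℝ := fun l => (1 - β' * lam l)⁻¹ - (1 - α' * lam l)⁻¹ with hμ
  have hT : ∀ l, (Sb - Sa) (e l) = μ l • e l := by
    intro l
    rw [ContinuousLinearMap.sub_apply, eigS α' Sa hSa l (hden_a l),
      eigS β' Sb hSb l (hden_b l), ← sub_smul]
  have Tsym : ∀ x y : H, (inner ℝ ((Sb - Sa) x) y : ℝ) = inner ℝ x ((Sb - Sa) y) := by
    intro x y
    simp only [ContinuousLinearMap.sub_apply, inner_sub_left, inner_sub_right]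
    rw [symS α' Sa hSa' x y, symS β' Sb hSb' x y]
  -- the Hilbert basis
  let bb : HilbertBasis ℕ ℝ H := HilbertBasis.mk he_on he_dense.ge
  have hbb : ∀ l, bb l = e l := fun l => congrFun (HilbertBasis.coe_mk he_on he_dense.ge) l
  -- the quadratic form of `Sb - Sa` in coordinates
  have hform : ∀ x : H,
      (inner ℝ ((Sb - Sa) x) x : ℝ) = ∑' l, μ l * (inner ℝ x (e l) : ℝ) ^ 2 := by
    intro x
    rw [← bb.tsum_inner_mul_inner ((Sb - Sa) x) x]
    apply tsum_congr
    intro l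
    rw [hbb l, Tsym x (e l), hT l, real_inner_smul_right, real_inner_comm (e l) x]
    ring
  -- the sign of μ
  have hmu_eq : ∀ l, μ l = ((β' - α') * lam l) / ((1 - α' * lam l) * (1 - β' * lam l)) := by
    intro l
    show (1 - β' * lam l)⁻¹ - (1 - α' * lam l)⁻¹ = _
    rw [inv_sub_inv (hden_b l) (hden_a l), mul_comm (1 - β' * lam l)]
    congr 1
    ring
  set S : Set ℕ := {l : ℕ | α' * lam l < 1 ∧ 1 < β' * lam l} with hS
  have hmu_neg : ∀ l ∈ S, μ l < 0 := by
    intro l hl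
    obtain ⟨h1, h2⟩ := hl
    rw [hmu_eq]
    exact div_neg_of_pos_of_neg (mul_pos (by linarith) (hpos l))
      (mul_neg_of_pos_of_neg (by linarith) (by linarith))
  have hmu_pos : ∀ l ∉ S, 0 < μ l := by
    intro l hl
    simp only [hS, Set.mem_setOf_eq, not_and, not_lt] at hl
    rw [hmu_eq]
    apply div_pos (mul_pos (by linarith) (hpos l))
    rcases lt_or_gt_of_ne (ha l) with h | h
    · have h2 : β' * lam l < 1 := lt_of_le_of_ne (hl h) (hb l)
      exact mul_pos (by linarith) (by linarith)
    · have h3 : α' * lam l < β' * lam l := mul_lt_mul_of_pos_right hαβ (hpos l)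
      exact mul_pos_of_neg_of_neg (by linarith) (by linarith)
  -- S is finite
  have hfin : S.Finite := by
    have h0 : Tendsto (fun l => β' * lam l) atTop (nhds 0) := by
      simpa using hlim.const_mul β'
    have hev : ∀ᶠ l in atTop, β' * lam l < 1 := h0.eventually (eventually_lt_nhds one_pos)
    obtain ⟨M, hM⟩ := eventually_atTop.mp hev
    apply (Set.finite_Iio M).subset
    intro l hl
    by_contra hge
    simp only [Set.mem_Iio, not_lt] at hge
    exact absurd hl.2 (not_lt.mpr (hM l hge).le)
  haveI : Fintype S := hfin.fintype
  -- the subspace V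
  have hli : LinearIndependent ℝ (fun i : S => e i) :=
    he_on.linearIndependent.comp _ Subtype.val_injective
  refine ⟨Submodule.span ℝ (Set.range (fun i : S => e i)), ?_, ?_, ?_, ?_⟩
  · exact FiniteDimensional.span_of_finite ℝ (Set.finite_range _)
  · rw [finrank_span_eq_card hli, ← hN, Set.ncard_eq_toFinset_card' S, Set.toFinset_card]
  · -- negativity on V
    intro x hx hx0
    set V := Submodule.span ℝ (Set.range (fun i : S => e i)) with hV
    -- coefficients outside S vanish
    have hcoef : ∀ l ∉ S, (inner ℝ x (e l) : ℝ) = 0 := by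
      intro l hl
      have hle : V ≤ (ℝ ∙ (e l))ᗮ := by
        rw [Submodule.span_le]
        rintro _ ⟨⟨j, hj⟩, rfl⟩
        rw [SetLike.mem_coe, Submodule.mem_orthogonal_singleton_iff_inner_right]
        exact he_on.2 (fun h : l = j => hl (h ▸ hj))
      have := Submodule.mem_orthogonal_singleton_iff_inner_right.mp (hle hx)
      rw [real_inner_comm]
      exact this
    -- some coefficient is nonzero
    have hex : ∃ l ∈ S, (inner ℝ x (e l) : ℝ) ≠ 0 := by
      by_contra hc
      push_neg at hc
      have hall : ∀ l, (inner ℝ x (e l) : ℝ) = 0 := by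
        intro l
        by_cases hl : l ∈ S
        · exact hc l hl
        · exact hcoef l hl
      apply hx0
      have hterm : ∀ l, (inner ℝ x (bb l) : ℝ) * inner ℝ (bb l) x = 0 := fun l => by
        rw [hbb l, hall l, zero_mul]
      have hxx : (inner ℝ x x : ℝ) = 0 := by
        rw [← bb.tsum_inner_mul_inner x x, tsum_congr hterm, tsum_zero]
      exact inner_self_eq_zero.mp hxx
    rw [hform x]
    have hsum : ∑' l, μ l * (inner ℝ x (e l) : ℝ) ^ 2
        = ∑ l ∈ hfin.toFinset, μ l * (inner ℝ x (e l) : ℝ) ^ 2 := by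
      apply tsum_eq_sum
      intro l hl
      rw [hcoef l (by simpa using hl)]
      ring
    rw [hsum]
    obtain ⟨l0, hl0, hc0⟩ := hex
    have hlt : ∑ l ∈ hfin.toFinset, μ l * (inner ℝ x (e l) : ℝ) ^ 2
        < ∑ l ∈ hfin.toFinset, (0 : ℝ) := by
      apply Finset.sum_lt_sum
      · intro i hi
        have hi' : i ∈ S := hfin.mem_toFinset.mp hi
        exact mul_nonpos_of_nonpos_of_nonneg (hmu_neg i hi').le (sq_nonneg _)
      · refine ⟨l0, hfin.mem_toFinset.mpr hl0, ?_⟩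
        have h1 := hmu_neg l0 hl0
        have h2 : 0 < (inner ℝ x (e l0) : ℝ) ^ 2 := by positivity
        exact mul_neg_of_neg_of_pos h1 h2
    simpa using hlt
  · -- nonnegativity on Vᗮ
    intro x hx
    rw [hform x]
    apply tsum_nonneg
    intro l
    by_cases hl : l ∈ S
    · have : e l ∈ Submodule.span ℝ (Set.range (fun i : S => e i)) :=
        Submodule.subset_span ⟨⟨l, hl⟩, rfl⟩
      have h0 : (inner ℝ (e l) x : ℝ) = 0 := hx (e l) this
      rw [real_inner_comm] at h0
      rw [h0]
      simp
    · have := hmu_pos l hl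
      positivity
end
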